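/- arXiv:cs/0103017 — 6 statements merged into one kernel-verified Lean document; each statement's English description precedes it below -/
import Mathlib

section
/- For all real numbers α, t₁, t₂, t₃, t₄, t₅, the determinant of the 5×5 matrix whose i-th row is (1, α·tᵢ, cos tᵢ, sin tᵢ, α²tᵢ² + cos²tᵢ + sin²tᵢ) equals α³ times the determinant of the 5×5 matrix whose i-th row is (1, tᵢ, cos tᵢ, sin tᵢ, tᵢ²). In particular, the sign of the insphere predicate for five points on the helix h_α(t) = (αt, cos t, sin t) does not depend on the pitch α > 0. -/
noncomputable section
open scoped Classical ENNReal Pointwise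
open MeasureTheory Real

/-- Points of `ℝ³` as Euclidean space. -/
abbrev E3 : Type := EuclideanSpace ℝ (Fin 3)

/-- The point `(x, y, z) ∈ ℝ³`. -/
def mk3 (x y z : ℝ) : E3 := (WithLp.equiv 2 (Fin 3 → ℝ)).symm ![x, y, z]

/-- `p` and `q` form a Delaunay edge of the finite set `S`: they are distinct points of `S`
lying on a sphere having no point of `S` in its interior. -/
def IsDelaunayEdge (S : Finset E3) (p q : E3) : Prop :=
  p ∈ S ∧ q ∈ S ∧ p ≠ q ∧
    ∃ (c : E3) (ρ : ℝ), 0 < ρ ∧ dist c p = ρ ∧ dist c q = ρ ∧ ∀ s ∈ S, ρ ≤ dist c s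

/-- The number of (unordered) Delaunay edges of `S`. -/
def delaunayEdgeCount (S : Finset E3) : ℕ :=
  Set.ncard {pq : E3 × E3 | IsDelaunayEdge S pq.1 pq.2} / 2

/-- The minimum pairwise distance of a finite point set. -/
def minPairDist (S : Finset E3) : ℝ :=
  sInf {d : ℝ | ∃ p ∈ S, ∃ q ∈ S, p ≠ q ∧ d = dist p q}

/-- The spread of a finite point set: diameter divided by minimum pairwise distance. -/
def spread (S : Finset E3) : ℝ := Metric.diam (S : Set E3) / minPairDist S
/-- The insphere matrix of the five points `h_α(tᵢ) = (α tᵢ, cos tᵢ, sin tᵢ)` on the helix of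
pitch `α`: its `i`-th row is `(1, α tᵢ, cos tᵢ, sin tᵢ, α² tᵢ² + cos² tᵢ + sin² tᵢ)`. -/
def helixInsphereMatrix (α : ℝ) (t : Fin 5 → ℝ) : Matrix (Fin 5) (Fin 5) ℝ :=
  Matrix.of fun i j =>
    ![1, α * t i, Real.cos (t i), Real.sin (t i),
      α ^ 2 * t i ^ 2 + Real.cos (t i) ^ 2 + Real.sin (t i) ^ 2] j

/-- The matrix whose `i`-th row is `(1, tᵢ, cos tᵢ, sin tᵢ, tᵢ²)`. -/
def helixReducedMatrix (t : Fin 5 → ℝ) : Matrix (Fin 5) (Fin 5) ℝ :=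
  Matrix.of fun i j =>
    ![1, t i, Real.cos (t i), Real.sin (t i), t i ^ 2] j

lemma helix_factor (α : ℝ) (t : Fin 5 → ℝ) :
    (helixInsphereMatrix α t).det = α ^ 3 * (helixReducedMatrix t).det := by
  have h : helixInsphereMatrix α t =
      helixReducedMatrix t *
        Matrix.of ![![1,0,0,0,1], ![0,α,0,0,0], ![0,0,1,0,0], ![0,0,0,1,0], ![0,0,0,0,α^2]] := by
    ext i j
    fin_cases j <;>
      simp [helixInsphereMatrix, helixReducedMatrix, Matrix.mul_apply, Fin.sum_univ_five,
        Matrix.vecHead, Matrix.vecTail] <;>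
      ring_nf <;>
      nlinarith [Real.sin_sq_add_cos_sq (t i)]
  rw [h, Matrix.det_mul]
  have : (Matrix.of ![![1,0,0,0,1], ![0,α,0,0,0], ![0,0,1,0,0], ![0,0,0,1,0],
      ![0,0,0,0,α^2]] : Matrix (Fin 5) (Fin 5) ℝ).det = α ^ 3 := by
    rw [Matrix.det_succ_row_zero]
    simp [Fin.sum_univ_succ, Matrix.det_succ_row_zero]
    ring
  rw [this]; ring

/-- The insphere determinant for five points on the helix of pitch `α` equals `α³` times the
determinant of the reduced matrix; in particular, for `α > 0` the sign of the insphere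
predicate for five points on the helix `h_α(t) = (αt, cos t, sin t)` does not depend on the
pitch `α`. -/
theorem helix_insphere_det (α : ℝ) (t : Fin 5 → ℝ) :
    (helixInsphereMatrix α t).det = α ^ 3 * (helixReducedMatrix t).det ∧
    (0 < α →
      Real.sign (helixInsphereMatrix α t).det =
        Real.sign (helixInsphereMatrix 1 t).det) := by
  refine ⟨helix_factor α t, fun hα => ?_⟩
  rw [helix_factor, helix_factor]
  have hα3 : 0 < α ^ 3 := pow_pos hα 3
  rcases lt_trichotomy (helixReducedMatrix t).det 0 with h | h | h
  · rw [Real.sign_of_neg (by nlinarith), Real.sign_of_neg (by nlinarith)]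
  · simp [h]
  · rw [Real.sign_of_pos (by nlinarith), Real.sign_of_pos (by nlinarith)]
end
end

section
/- For every real t with 0 < t < π, there exist a point c ∈ ℝ³ and a radius ρ > 0 such that dist(c, h(t)) = dist(c, h(−t)) = ρ and dist(c, h(s)) > ρ for every real s with s ≠ t and s ≠ −t, where h(s) = (s, cos s, sin s). That is, the sphere bitangent to the helix at h(t) and h(−t) intersects the helix only at its two points of tangency. -/
noncomputable section
open scoped Classical ENNReal Pointwise
open MeasureTheory Real

/-- The unit-pitch helix `h(s) = (s, cos s, sin s)`. -/
def helix (s : ℝ) : E3 := mk3 s (Real.cos s) (Real.sin s)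

/-
Centre the sphere at `c = (0, -a, 0)` with `a = t / sin t`. Then
`dist c (h s)² = s² + 2a cos s + 1 + a²` is even in `s`, so it suffices that `s² + 2a cos s`
has a strict minimum over `s ≥ 0` at `s = t`. Its derivative `2(s - a sin s)` changes sign
exactly at `t` on `(0, π)`, because `sin s / s` is strictly decreasing there (concavity of `sin`).
For `s ≥ π` the crude bound `s² + 2a cos s ≥ π² - 2a` suffices: with `u = t / 2`,
`2a(1 + cos t) = 2t cos u / sin u`, and `cos u ≤ (π - t) / 2`, `sin u > t / π` give
`2a(1 + cos t) < π² - t²`.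
-/

open Set

lemma dist_mk3_sq (x y z x' y' z' : ℝ) :
    dist (mk3 x y z) (mk3 x' y' z') ^ 2 = (x - x') ^ 2 + (y - y') ^ 2 + (z - z') ^ 2 := by
  rw [EuclideanSpace.dist_eq, sq_sqrt (by positivity)]
  simp [mk3, Fin.sum_univ_three, Real.dist_eq, sq_abs]

lemma dist_mk3_helix_sq (a s : ℝ) :
    dist (mk3 0 (-a) 0) (helix s) ^ 2 = s ^ 2 + 2 * a * cos s + (1 + a ^ 2) := by
  rw [helix, dist_mk3_sq]
  linear_combination sin_sq_add_cos_sq s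

lemma strictAntiOn_sin_div : StrictAntiOn (fun x => sin x / x) (Ioc 0 π) := by
  intro x hx y hy hxy
  have := strictConcaveOn_sin_Icc.secant_strict_mono (a := 0) ⟨le_rfl, pi_pos.le⟩
    (Ioc_subset_Icc_self hx) (Ioc_subset_Icc_self hy) hx.1.ne' hy.1.ne' hxy
  simpa using this

lemma hasDerivAt_sq_add_mul_cos (a x : ℝ) :
    HasDerivAt (fun x => x ^ 2 + 2 * a * cos x) (2 * (x - a * sin x)) x :=
  ((hasDerivAt_pow 2 x).add ((hasDerivAt_cos x).const_mul (2 * a))).congr_deriv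
    (by push_cast; ring)

section BitangentProfile

variable {t : ℝ} (ht₀ : 0 < t) (htπ : t < π)
include ht₀ htπ

lemma strictAntiOn_sq_add_mul_cos :
    StrictAntiOn (fun x => x ^ 2 + 2 * (t / sin t) * cos x) (Icc 0 t) := by
  have hsin : 0 < sin t := sin_pos_of_pos_of_lt_pi ht₀ htπ
  refine strictAntiOn_of_hasDerivWithinAt_neg (convex_Icc 0 t) (by fun_prop)
    (fun x _ => (hasDerivAt_sq_add_mul_cos _ x).hasDerivWithinAt) fun x hx => ?_
  rw [interior_Icc] at hx
  have h := strictAntiOn_sin_div ⟨hx.1, hx.2.le.trans htπ.le⟩ ⟨ht₀, htπ.le⟩ hx.2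
  rw [div_lt_div_iff₀ ht₀ hx.1] at h
  have : x < t / sin t * sin x := by rw [div_mul_eq_mul_div, lt_div_iff₀ hsin]; linarith
  linarith

lemma strictMonoOn_sq_add_mul_cos :
    StrictMonoOn (fun x => x ^ 2 + 2 * (t / sin t) * cos x) (Icc t π) := by
  have hsin : 0 < sin t := sin_pos_of_pos_of_lt_pi ht₀ htπ
  refine strictMonoOn_of_hasDerivWithinAt_pos (convex_Icc t π) (by fun_prop)
    (fun x _ => (hasDerivAt_sq_add_mul_cos _ x).hasDerivWithinAt) fun x hx => ?_
  rw [interior_Icc] at hx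
  have hx₀ : 0 < x := ht₀.trans hx.1
  have h := strictAntiOn_sin_div ⟨ht₀, htπ.le⟩ ⟨hx₀, hx.2.le⟩ hx.1
  rw [div_lt_div_iff₀ hx₀ ht₀] at h
  have : t / sin t * sin x < x := by rw [div_mul_eq_mul_div, div_lt_iff₀ hsin]; linarith
  linarith

lemma sq_add_mul_cos_lt_pi_sq_sub :
    t ^ 2 + 2 * (t / sin t) * cos t < π ^ 2 - 2 * (t / sin t) := by
  set u := t / 2 with hu
  have hsin : 0 < sin u := sin_pos_of_pos_of_lt_pi (by linarith) (by linarith)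
  have hcos : 0 < cos u := cos_pos_of_mem_Ioo ⟨by linarith [pi_pos], by linarith⟩
  have hjordan : t < π * sin u := by
    have := mul_lt_sin (x := u) (by linarith) (by linarith)
    rw [div_mul_eq_mul_div, div_lt_iff₀ pi_pos] at this
    linarith
  have hcos_le : cos u ≤ (π - t) / 2 := by
    rw [← sin_pi_div_two_sub]
    exact (sin_le (by linarith)).trans_eq (by ring)
  have hhalf : 2 * (t / sin t) + 2 * (t / sin t) * cos t = 2 * t * cos u / sin u := by
    rw [show t = 2 * u by ring, sin_two_mul, cos_two_mul]
    field_simp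
    ring
  have key : 2 * t * cos u < (π ^ 2 - t ^ 2) * sin u := calc
    2 * t * cos u ≤ t * (π - t) := by nlinarith
    _ < (π - t) * (π * sin u) := by
      rw [mul_comm]; exact mul_lt_mul_of_pos_left hjordan (by linarith)
    _ ≤ (π ^ 2 - t ^ 2) * sin u := by
      nlinarith [mul_nonneg (mul_nonneg (sub_pos.2 htπ).le ht₀.le) hsin.le]
  rw [← div_lt_iff₀ hsin] at key
  linarith

lemma sq_add_mul_cos_lt_of_nonneg {s : ℝ} (hs : 0 ≤ s) (hst : s ≠ t) :
    t ^ 2 + 2 * (t / sin t) * cos t < s ^ 2 + 2 * (t / sin t) * cos s := by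
  rcases hst.lt_or_gt with hlt | hgt
  · exact strictAntiOn_sq_add_mul_cos ht₀ htπ ⟨hs, hlt.le⟩ ⟨ht₀.le, le_rfl⟩ hlt
  rcases le_or_gt s π with hsπ | hπs
  · exact strictMonoOn_sq_add_mul_cos ht₀ htπ ⟨le_rfl, htπ.le⟩ ⟨hgt.le, hsπ⟩ hgt
  have ha : 0 < t / sin t := div_pos ht₀ (sin_pos_of_pos_of_lt_pi ht₀ htπ)
  calc t ^ 2 + 2 * (t / sin t) * cos t < π ^ 2 - 2 * (t / sin t) :=
        sq_add_mul_cos_lt_pi_sq_sub ht₀ htπ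
    _ ≤ s ^ 2 + 2 * (t / sin t) * cos s := by
        nlinarith [mul_le_mul_of_nonneg_left (neg_one_le_cos s) ha.le]

lemma sq_add_mul_cos_lt {s : ℝ} (hst : s ≠ t) (hst' : s ≠ -t) :
    t ^ 2 + 2 * (t / sin t) * cos t < s ^ 2 + 2 * (t / sin t) * cos s := by
  have habs : |s| ≠ t := fun h => ((abs_eq ht₀.le).1 h).elim hst hst'
  simpa only [sq_abs, cos_abs] using sq_add_mul_cos_lt_of_nonneg ht₀ htπ (abs_nonneg s) habs

end BitangentProfile

/-- For `0 < t < π`, the sphere bitangent to the helix at `h(t)` and `h(-t)` intersects the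
helix only at its two points of tangency: there are a center `c` and radius `ρ > 0` with
`dist c (h t) = dist c (h (-t)) = ρ` and `dist c (h s) > ρ` for all `s ∉ {t, -t}`. -/
theorem bitangent_sphere_meets_helix_only_at_tangencies :
    ∀ t : ℝ, 0 < t → t < Real.pi →
      ∃ (c : E3) (ρ : ℝ), 0 < ρ ∧ dist c (helix t) = ρ ∧ dist c (helix (-t)) = ρ ∧
        ∀ s : ℝ, s ≠ t → s ≠ -t → ρ < dist c (helix s) := by
  intro t ht₀ htπ
  set c := mk3 0 (-(t / sin t)) 0
  refine ⟨c, dist c (helix t), dist_pos.2 ?_, rfl, ?_, fun s hst hst' => ?_⟩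
  · exact ne_of_apply_ne (· 0) (by simpa [c, mk3, helix] using ht₀.ne)
  · rw [← sq_eq_sq₀ dist_nonneg dist_nonneg, dist_mk3_helix_sq, dist_mk3_helix_sq, cos_neg,
      neg_sq]
  · refine lt_of_pow_lt_pow_left₀ 2 dist_nonneg ?_
    rw [dist_mk3_helix_sq, dist_mk3_helix_sq]
    linarith [sq_add_mul_cos_lt ht₀ htπ hst hst']
end
end

section
/- Let S be any finite set of points on the helix h(t) = (t, cos t, sin t) with all parameters t in the open interval (−π, π). Then every pair of distinct points of S forms a Delaunay edge of S, i.e., the Delaunay triangulation of S is neighborly. -/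
noncomputable section
open scoped Classical ENNReal Pointwise
open MeasureTheory Real

namespace HelixNeighborly

lemma dist_mk3_sq (x y z x' y' z' : ℝ) :
    dist (mk3 x y z) (mk3 x' y' z') ^ 2 = (x - x')^2 + (y - y')^2 + (z - z')^2 := by
  rw [EuclideanSpace.dist_eq, Real.sq_sqrt (by positivity)]
  simp [mk3, Fin.sum_univ_three, Real.dist_eq, sq_abs]

lemma helix_inj : Function.Injective helix := by
  intro s t h
  have := congrArg (fun p : E3 => p 0) h
  simpa [helix, mk3] using this

lemma alg (m K a t : ℝ) :
    ((m - t)^2 + (-(K*cos m)/2 - cos t)^2 + (-(K*sin m)/2 - sin t)^2)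
      - ((m - a)^2 + (-(K*cos m)/2 - cos a)^2 + (-(K*sin m)/2 - sin a)^2)
    = (t-m)^2 - (a-m)^2 + K*(cos (t-m) - cos (a-m)) := by
  rw [Real.cos_sub, Real.cos_sub]
  linear_combination Real.sin_sq_add_cos_sq t - Real.sin_sq_add_cos_sq a

lemma sinc_anti {d u : ℝ} (hd : 0 ≤ d) (hdu : d ≤ u) (hu : u ≤ π) : d * sin u ≤ u * sin d := by
  rcases eq_or_lt_of_le hdu with rfl | hdu
  · rw [mul_comm]
  have hu0 : 0 < u := lt_of_le_of_lt hd hdu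
  have hle : d/u ≤ 1 := (div_le_one hu0).2 hdu.le
  have h := strictConcaveOn_sin_Icc.concaveOn.2 (x := (0:ℝ)) (y := u)
    ⟨le_rfl, pi_pos.le⟩ ⟨hu0.le, hu⟩
    (show (0:ℝ) ≤ 1 - d/u by linarith)
    (show (0:ℝ) ≤ d/u by positivity)
    (show (1 - d/u) + d/u = 1 by ring)
  simp only [smul_eq_mul, mul_zero, zero_add, sin_zero] at h
  rw [div_mul_cancel₀ d hu0.ne'] at h
  have h2 : d / u * sin u ≤ sin d := h
  calc d * sin u = (d/u * sin u) * u := by field_simp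
    _ ≤ sin d * u := mul_le_mul_of_nonneg_right h2 hu0.le
    _ = u * sin d := mul_comm _ _

lemma x_cos_le_sin {x : ℝ} (hx : 0 ≤ x) (hx' : x ≤ π) : x * cos x ≤ sin x := by
  rcases le_or_gt (cos x) 0 with h | h
  · have : 0 ≤ sin x := sin_nonneg_of_nonneg_of_le_pi hx hx'
    nlinarith
  · have hx2 : x < π/2 := by
      by_contra hc
      push_neg at hc
      exact absurd (cos_nonpos_of_pi_div_two_le_of_le hc (by linarith [pi_pos])) (not_le.2 h)
    rcases eq_or_lt_of_le hx with rfl | hx0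
    · simp
    have ht := lt_tan hx0 hx2
    rw [tan_eq_sin_div_cos] at ht
    calc x * cos x ≤ sin x / cos x * cos x := by nlinarith
      _ = sin x := by field_simp

lemma inside (u v : ℝ) (hu : 0 ≤ u) (hv : 0 ≤ v) (huv : u + v ≤ π) :
    u * v * sin (u + v) ≤ (u + v) * (sin u * sin v) := by
  rw [sin_add]
  have h1 : u * cos u ≤ sin u := x_cos_le_sin hu (by linarith)
  have h2 : v * cos v ≤ sin v := x_cos_le_sin hv (by linarith)
  have s1 : 0 ≤ sin u := sin_nonneg_of_nonneg_of_le_pi hu (by linarith)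
  have s2 : 0 ≤ sin v := sin_nonneg_of_nonneg_of_le_pi hv (by linarith)
  nlinarith [mul_nonneg (mul_nonneg hu s1) (sub_nonneg.2 h2),
    mul_nonneg (mul_nonneg hv s2) (sub_nonneg.2 h1)]

lemma psi_nonneg_aux {d s : ℝ} (hd0 : 0 < d) (hdpi : d < π) (hs0 : 0 ≤ s)
    (hs : s < 2*π - d) : 0 ≤ s^2 - d^2 + (2*d/sin d)*(cos s - cos d) := by
  have hsd : 0 < sin d := sin_pos_of_pos_of_lt_pi hd0 hdpi
  set u : ℝ := (d+s)/2 with hu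
  have hcos : cos s - cos d = 2 * (sin u * sin ((d-s)/2)) := by
    rw [cos_sub_cos]
    have e1 : (s + d)/2 = u := by rw [hu]; ring
    have e2 : (s - d)/2 = -((d-s)/2) := by ring
    rw [e1, e2, sin_neg]; ring
  have hsq : s^2 - d^2 = -(4 * (u * ((d-s)/2))) := by rw [hu]; ring
  have hupi : u ≤ π := by rw [hu]; linarith
  have key : 4 * (u * ((d-s)/2)) * sin d ≤ 2*d * (2 * (sin u * sin ((d-s)/2))) := by
    rcases le_or_gt s d with hcase | hcase
    · have h := inside u ((d-s)/2) (by positivity) (by linarith) (by rw [hu]; linarith)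
      have : u + (d-s)/2 = d := by rw [hu]; ring
      rw [this] at h
      nlinarith
    · set w : ℝ := (s-d)/2 with hw
      have hw0 : 0 ≤ w := by rw [hw]; linarith
      have e3 : (d-s)/2 = -w := by rw [hw]; ring
      rw [e3, sin_neg]
      have h1 : d * sin u ≤ u * sin d := sinc_anti hd0.le (by rw [hu]; linarith) hupi
      have h2 : sin w ≤ w := sin_le hw0
      have su : 0 ≤ sin u := sin_nonneg_of_nonneg_of_le_pi (by rw [hu]; linarith) hupi
      have sw : 0 ≤ sin w := sin_nonneg_of_nonneg_of_le_pi hw0 (by rw [hw]; linarith)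
      have A : d*sin u*sin w ≤ d*sin u*w := by
        nlinarith [mul_nonneg (mul_nonneg hd0.le su) (sub_nonneg.2 h2)]
      have B : d*sin u*w ≤ u*sin d*w := by
        nlinarith [mul_nonneg hw0 (sub_nonneg.2 h1)]
      nlinarith
  have hdiv : 4 * (u * ((d-s)/2)) ≤ (2*d/sin d) * (2 * (sin u * sin ((d-s)/2))) := by
    rw [show (2*d/sin d) * (2*(sin u * sin ((d-s)/2)))
        = (2*d*(2*(sin u * sin ((d-s)/2))))/sin d from by ring, le_div_iff₀ hsd]
    linarith [key]
  rw [hcos, hsq]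
  linarith

lemma psi_nonneg {d s : ℝ} (hd0 : 0 < d) (hdpi : d < π) (hs : |s| < 2*π - d) :
    0 ≤ s^2 - d^2 + (2*d/sin d)*(cos s - cos d) := by
  rcases le_or_gt 0 s with h | h
  · exact psi_nonneg_aux hd0 hdpi h (by rwa [abs_of_nonneg h] at hs)
  · have := psi_nonneg_aux hd0 hdpi (by linarith : (0:ℝ) ≤ -s)
      (by rwa [abs_of_neg h] at hs)
    rw [cos_neg] at this
    nlinarith [this]

/-- The main construction: an empty sphere through `helix a` and `helix b`. -/
lemma helix_edge (S : Finset E3)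
    (hS : ∀ p ∈ S, ∃ t : ℝ, -π < t ∧ t < π ∧ p = helix t)
    {a b : ℝ} (ha : -π < a) (hb' : b < π) (hab : a < b) :
    ∃ c ρ, 0 < ρ ∧ dist c (helix a) = ρ ∧ dist c (helix b) = ρ ∧ ∀ s ∈ S, ρ ≤ dist c s := by
  set m : ℝ := (a+b)/2 with hm
  set d : ℝ := (b-a)/2 with hd
  have hd0 : 0 < d := by rw [hd]; linarith
  have hdpi : d < π := by rw [hd]; linarith
  set K : ℝ := 2*d/sin d with hK
  set c : E3 := mk3 m (-(K*cos m)/2) (-(K*sin m)/2) with hc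
  have ham : a - m = -d := by rw [hm, hd]; ring
  have hbm : b - m = d := by rw [hm, hd]; ring
  -- squared-distance difference formula
  have diff : ∀ t : ℝ, dist c (helix t)^2 - dist c (helix a)^2
      = (t-m)^2 - d^2 + K*(cos (t-m) - cos d) := by
    intro t
    rw [hc]
    show dist (mk3 m (-(K*cos m)/2) (-(K*sin m)/2)) (mk3 t (cos t) (sin t)) ^ 2
      - dist (mk3 m (-(K*cos m)/2) (-(K*sin m)/2)) (mk3 a (cos a) (sin a)) ^ 2 = _
    rw [dist_mk3_sq, dist_mk3_sq]
    have := alg m K a t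
    rw [ham] at this
    rw [this, cos_neg]
    ring_nf
  -- every helix point with parameter in (-π, π) is outside the sphere
  have key : ∀ t : ℝ, -π < t → t < π →
      dist c (helix a)^2 ≤ dist c (helix t)^2 := by
    intro t ht ht'
    have habs : |t - m| < 2*π - d := by
      rw [abs_lt]
      constructor
      · rw [hm, hd]; linarith
      · rw [hm, hd]; linarith
    have := psi_nonneg hd0 hdpi habs
    rw [← hK] at this
    linarith [diff t, this]
  -- the two endpoints are on the sphere
  have hbsq : dist c (helix b)^2 = dist c (helix a)^2 := by
    have := diff b
    rw [hbm] at this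
    simp at this
    linarith [this]
  have hbeq : dist c (helix b) = dist c (helix a) := by
    rw [← Real.sqrt_sq (dist_nonneg (x := c) (y := helix b)),
        ← Real.sqrt_sq (dist_nonneg (x := c) (y := helix a)), hbsq]
  have hne : helix a ≠ helix b := fun h => absurd (helix_inj h) (by linarith : a ≠ b)
  have hρ : 0 < dist c (helix a) := by
    rcases eq_or_lt_of_le (dist_nonneg (x := c) (y := helix a)) with h0 | h0
    · exfalso
      have h1 : c = helix a := by rw [← dist_eq_zero]; exact h0.symm
      have h2 : c = helix b := by rw [← dist_eq_zero]; linarith [hbeq]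
      exact hne (h1 ▸ h2)
    · exact h0
  refine ⟨c, dist c (helix a), hρ, rfl, hbeq, ?_⟩
  intro s hs
  obtain ⟨t, ht, ht', rfl⟩ := hS s hs
  have := key t ht ht'
  rw [← Real.sqrt_sq (dist_nonneg (x := c) (y := helix a)),
      ← Real.sqrt_sq (dist_nonneg (x := c) (y := helix t))]
  exact Real.sqrt_le_sqrt this

end HelixNeighborly

/-- Any finite set of points on a single turn `(-π, π)` of the unit-pitch helix has a
neighborly Delaunay triangulation: every pair of distinct points forms a Delaunay edge. -/
theorem helix_sample_neighborly (S : Finset E3)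
    (hS : ∀ p ∈ S, ∃ t : ℝ, -Real.pi < t ∧ t < Real.pi ∧ p = helix t) :
    ∀ p ∈ S, ∀ q ∈ S, p ≠ q → IsDelaunayEdge S p q := by
  intro p hp q hq hpq
  obtain ⟨ta, hta, hta', rfl⟩ := hS p hp
  obtain ⟨tb, htb, htb', rfl⟩ := hS q hq
  have hne : ta ≠ tb := fun h => hpq (by rw [h])
  refine ⟨hp, hq, hpq, ?_⟩
  rcases hne.lt_or_gt with h | h
  · obtain ⟨c, ρ, h1, h2, h3, h4⟩ := HelixNeighborly.helix_edge S hS hta htb' h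
    exact ⟨c, ρ, h1, h2, h3, h4⟩
  · obtain ⟨c, ρ, h1, h2, h3, h4⟩ := HelixNeighborly.helix_edge S hS htb hta' h
    exact ⟨c, ρ, h1, h3, h2, h4⟩
end
end

section
/- There is an absolute constant c > 0 (one may take c = 4π/27) such that the following holds. Let 1 ≤ r ≤ R be real numbers, let B be a closed ball of radius R in ℝ³, let b₁, …, b_k be finitely many open balls each of radius at least r, and let C = B \ (b₁ ∪ … ∪ b_k). If x is a point of C whose distance from the boundary ∂C equals 2/3, then the 2-dimensional Hausdorff measure of ∂C intersected with the closed unit ball centered at x is at least c. -/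
noncomputable section
open scoped Classical ENNReal Pointwise
open MeasureTheory Real

/-!
Let `y` be a point of `∂C` nearest to `x`, so `B(x, 2/3) ⊆ C`. Whether `y` lies on the outer
sphere or on the sphere of a hole of radius `≥ 1`, that sphere is tangent at `y` to `B(x, 2/3)`;
hence, with `e = (y - x) / ‖y - x‖`, for every `w ⊥ e` with `‖w‖² ≤ 1/8` the point `y + w - e/4`
lies in `C` and `y + w + e/4` does not. Each such line thus meets `∂C` inside `B(x, 1)`, and the
orthogonal projection onto `e⊥`, being `1`-Lipschitz, shows that `∂C ∩ B(x, 1)` has area at least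
that of a square of side `1/2`: one may take `c = 1/4`.
-/

open scoped RealInnerProductSpace
open Metric Set

theorem IsPreconnected.inter_frontier_nonempty {X : Type*} [TopologicalSpace X] {s t : Set X}
    (hs : IsPreconnected s) {a b : X} (ha : a ∈ s) (hat : a ∈ t) (hb : b ∈ s) (hbt : b ∉ t) :
    (s ∩ frontier t).Nonempty := by
  by_contra h
  have hcover : s ⊆ interior t ∪ (closure t)ᶜ := fun z hz => by
    by_cases hzt : z ∈ closure t
    · exact Or.inl (by_contra fun hzi => h ⟨z, hz, hzt, hzi⟩)
    · exact Or.inr hzt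
  rcases hs.subset_or_subset isOpen_interior isClosed_closure.isOpen_compl
    (disjoint_compl_right.mono_left interior_subset_closure) hcover with hst | hst
  · exact hbt (interior_subset (hst hb))
  · exact hst ha (subset_closure hat)

theorem frontier_iUnion_subset_of_finite {X ι : Type*} [TopologicalSpace X] [Finite ι]
    (s : ι → Set X) : frontier (⋃ i, s i) ⊆ ⋃ i, frontier (s i) := by
  intro z ⟨hzc, hzi⟩
  rw [closure_iUnion_of_finite] at hzc
  obtain ⟨i, hi⟩ := mem_iUnion.1 hzc
  exact mem_iUnion.2 ⟨i, hi, fun h => hzi (interior_mono (subset_iUnion s i) h)⟩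

theorem frontier_diff_subset {X : Type*} [TopologicalSpace X] (s t : Set X) :
    frontier (s \ t) ⊆ frontier s ∪ frontier t := by
  rw [sdiff_eq, ← frontier_compl t]
  exact (frontier_inter_subset s tᶜ).trans (union_subset_union inter_subset_left inter_subset_right)

theorem Metric.ball_infDist_frontier_subset {E : Type*} [NormedAddCommGroup E] [NormedSpace ℝ E]
    {s : Set E} {x : E} (hx : x ∈ s) : ball x (infDist x (frontier s)) ⊆ s := by
  intro z hz
  by_contra hzs
  obtain ⟨p, hp, hpf⟩ := (convex_ball x _).isPreconnected.inter_frontier_nonempty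
    (mem_ball_self (pos_of_mem_ball hz)) hx hz hzs
  exact ball_infDist_subset_compl hp hpf

def swissCheese {X ι : Type*} [PseudoMetricSpace X] (x₀ : X) (R : ℝ) (c : ι → X) (ρ : ι → ℝ) :
    Set X :=
  closedBall x₀ R \ ⋃ i, ball (c i) (ρ i)

theorem frontier_swissCheese_subset {X ι : Type*} [PseudoMetricSpace X] [Finite ι] (x₀ : X)
    (R : ℝ) (c : ι → X) (ρ : ι → ℝ) :
    frontier (swissCheese x₀ R c ρ) ⊆ sphere x₀ R ∪ ⋃ i, sphere (c i) (ρ i) :=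
  (frontier_diff_subset _ _).trans <| union_subset_union frontier_closedBall_subset_sphere <|
    (frontier_iUnion_subset_of_finite _).trans <| iUnion_mono fun _ => frontier_ball_subset_sphere

section InnerProductSpace

variable {E : Type*} [NormedAddCommGroup E] [InnerProductSpace ℝ E]

theorem norm_add_smul_sq_of_inner_eq_zero {w e : E} (hwe : ⟪w, e⟫ = 0) (he : ‖e‖ = 1) (t : ℝ) :
    ‖w + t • e‖ ^ 2 = ‖w‖ ^ 2 + t ^ 2 := by
  rw [norm_add_sq_real, real_inner_smul_right, hwe, norm_smul, he, mul_one, Real.norm_eq_abs,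
    sq_abs]
  ring

theorem smul_sub_eq_of_ball_subset_closedBall {x y c : E} {d R : ℝ} (hd : 0 < d) (hR : 0 < R)
    (h : ball x d ⊆ closedBall c R) (hxy : ‖y - x‖ = d) (hyc : ‖y - c‖ = R) :
    d • (y - c) = R • (y - x) := by
  set a := 1 + d / R
  have ha : a * R = R + d := by rw [add_mul, one_mul, div_mul_cancel₀ _ hR.ne']
  -- Testing the inclusion at this point of `closedBall x d` forces equality in Cauchy–Schwarz.
  have hz : x + (d / R) • (y - c) ∈ closedBall c R := by
    refine closure_minimal h isClosed_closedBall ?_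
    rw [closure_ball x hd.ne', mem_closedBall, dist_eq_norm, add_sub_cancel_left, norm_smul,
      hyc, Real.norm_of_nonneg (by positivity), div_mul_cancel₀ _ hR.ne']
  have hzc : x + (d / R) • (y - c) - c = a • (y - c) - (y - x) := by module
  rw [mem_closedBall, dist_eq_norm, hzc] at hz
  have hsq := norm_sub_sq_real (a • (y - c)) (y - x)
  rw [norm_smul, real_inner_smul_left, hyc, hxy, Real.norm_of_nonneg (by positivity)] at hsq
  have hinner : ‖y - c‖ * ‖y - x‖ ≤ ⟪y - c, y - x⟫ := by
    have hsq_le := pow_le_pow_left₀ (norm_nonneg _) hz 2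
    have hmul : a * (R * d) ≤ a * ⟪y - c, y - x⟫ := by nlinarith
    rw [hyc, hxy]
    exact le_of_mul_le_mul_left hmul (by positivity)
  rw [← hxy, ← hyc]
  exact inner_eq_norm_mul_iff_real.mp (le_antisymm (real_inner_le_norm _ _) hinner)

theorem smul_sub_eq_of_disjoint_ball {x y c : E} {d R : ℝ} (hd : 0 < d) (hR : 0 < R)
    (h : Disjoint (ball x d) (ball c R)) (hxy : ‖y - x‖ = d) (hyc : ‖c - y‖ = R) :
    d • (c - y) = R • (y - x) := by
  have hle := (disjoint_ball_ball_iff hd hR).mp h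
  have hadd : ‖(c - y) + (y - x)‖ = ‖c - y‖ + ‖y - x‖ := by
    refine le_antisymm (norm_add_le _ _) ?_
    rw [sub_add_sub_cancel, hxy, hyc, norm_sub_rev, ← dist_eq_norm]
    linarith
  rw [← hxy, ← hyc]
  exact norm_add_eq_iff_real.mp hadd

theorem exists_orthonormal_forall_inner_eq_zero {n : ℕ} (hn : Module.finrank ℝ E = n + 1)
    {e : E} (he : e ≠ 0) : ∃ u : Fin n → E, Orthonormal ℝ u ∧ ∀ i, ⟪u i, e⟫ = 0 := by
  have : Fact (Module.finrank ℝ E = n + 1) := ⟨hn⟩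
  let B := OrthonormalBasis.fromOrthogonalSpanSingleton (𝕜 := ℝ) n he
  exact ⟨fun i => B i, B.orthonormal.comp_linearIsometry (ℝ ∙ e)ᗮ.subtypeₗᵢ,
    fun i => Submodule.mem_orthogonal_singleton_iff_inner_left.mp (B i).2⟩

theorem lipschitzWith_one_inner_pi {ι : Type*} [Fintype ι] {u : ι → E} (hu : ∀ i, ‖u i‖ ≤ 1) :
    LipschitzWith 1 (fun z i => ⟪z, u i⟫) := by
  refine LipschitzWith.of_dist_le_mul fun z z' => ?_
  rw [NNReal.coe_one, one_mul, dist_pi_le_iff dist_nonneg]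
  intro i
  rw [Real.dist_eq, ← inner_sub_left, dist_eq_norm]
  exact (abs_real_inner_le_norm _ _).trans (mul_le_of_le_one_right (norm_nonneg _) (hu i))

theorem pi_Icc_subset_image_inner {ι : Type*} [Fintype ι] {u : ι → E} (hu : Orthonormal ℝ u)
    {e y : E} (hue : ∀ i, ⟪u i, e⟫ = 0) {b : ℝ} {A : Set E}
    (hA : ∀ w, ⟪w, e⟫ = 0 → ‖w‖ ^ 2 ≤ Fintype.card ι * b ^ 2 → ∃ t : ℝ, y + w + t • e ∈ A) :
    univ.pi (fun i => Icc (⟪y, u i⟫ - b) (⟪y, u i⟫ + b)) ⊆ (fun z i => ⟪z, u i⟫) '' A := by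
  intro s hs
  set l : ι → ℝ := fun i => s i - ⟪y, u i⟫
  have hl : ∀ i, l i ^ 2 ≤ b ^ 2 := fun i => by
    have := hs i (mem_univ i)
    exact sq_le_sq' (by simp only [l]; linarith [this.1]) (by simp only [l]; linarith [this.2])
  set w := ∑ i, l i • u i
  have hwe : ⟪w, e⟫ = 0 := by simp [w, sum_inner, real_inner_smul_left, hue]
  have hw : ‖w‖ ^ 2 ≤ Fintype.card ι * b ^ 2 := by
    rw [← real_inner_self_eq_norm_sq, hu.inner_sum, ← nsmul_eq_mul, ← Finset.card_univ,
      ← Finset.sum_const]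
    exact Finset.sum_le_sum fun i _ => by simpa [sq] using hl i
  obtain ⟨t, ht⟩ := hA w hwe hw
  refine ⟨y + w + t • e, ht, funext fun i => ?_⟩
  change ⟪y + w + t • e, u i⟫ = s i
  rw [inner_add_left, inner_add_left, real_inner_smul_left, real_inner_comm (u i) e, hue,
    hu.inner_left_fintype]
  simp [l]

end InnerProductSpace

theorem volume_le_hausdorffMeasure_of_subset_image {X ι : Type*} [EMetricSpace X]
    [MeasurableSpace X] [BorelSpace X] [Fintype ι] {f : X → ι → ℝ} (hf : LipschitzWith 1 f)
    {A : Set X} {S : Set (ι → ℝ)} (hS : S ⊆ f '' A) : volume S ≤ μH[Fintype.card ι] A :=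
  calc volume S ≤ volume (f '' A) := measure_mono hS
    _ = μH[Fintype.card ι] (f '' A) := by rw [hausdorffMeasure_pi_real]
    _ ≤ μH[Fintype.card ι] A := by
      simpa only [ENNReal.coe_one, ENNReal.one_rpow, one_mul] using
        hf.hausdorffMeasure_image_le (Nat.cast_nonneg (Fintype.card ι)) A

section SwissCheese

variable {E ι : Type*} [NormedAddCommGroup E] [InnerProductSpace ℝ E] [Finite ι]
  {x₀ : E} {R : ℝ} {c : ι → E} {ρ : ι → ℝ} {x y e w : E}

theorem add_add_smul_notMem_swissCheese {d r τ : ℝ} (hR : 0 < R) (hr : 0 < r)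
    (hρ : ∀ i, r ≤ ρ i) (hd : 0 < d) (hball : ball x d ⊆ swissCheese x₀ R c ρ)
    (hy : y ∈ frontier (swissCheese x₀ R c ρ)) (he : ‖e‖ = 1) (hyx : y - x = d • e)
    (hwe : ⟪w, e⟫ = 0) (hτ : 0 < τ) (hw : ‖w‖ ^ 2 + τ ^ 2 < 2 * r * τ) :
    y + w + τ • e ∉ swissCheese x₀ R c ρ := by
  have hxy : ‖y - x‖ = d := by rw [hyx, norm_smul, he, mul_one, Real.norm_of_nonneg hd.le]
  intro hmem
  rcases frontier_swissCheese_subset x₀ R c ρ hy with hyR | hyc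
  · rw [mem_sphere, dist_eq_norm] at hyR
    have htan := smul_sub_eq_of_ball_subset_closedBall hd hR (hball.trans sdiff_subset) hxy hyR
    have hyx₀ : y - x₀ = R • e := smul_right_injective E hd.ne'
      (show d • (y - x₀) = d • R • e by rw [htan, hyx, smul_comm])
    have hnorm := norm_add_smul_sq_of_inner_eq_zero hwe he (R + τ)
    rw [show w + (R + τ) • e = y + w + τ • e - x₀ by rw [add_smul, ← hyx₀]; abel,
      ← dist_eq_norm] at hnorm
    have hle := pow_le_pow_left₀ dist_nonneg (mem_closedBall.mp hmem.1) 2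
    nlinarith [sq_nonneg ‖w‖]
  · obtain ⟨i, hi⟩ := mem_iUnion.mp hyc
    rw [mem_sphere, dist_eq_norm'] at hi
    have hρi : 0 < ρ i := hr.trans_le (hρ i)
    have hdisj : Disjoint (ball x d) (ball (c i) (ρ i)) :=
      disjoint_left.mpr fun z hz hzi => (hball hz).2 (mem_iUnion.mpr ⟨i, hzi⟩)
    have htan := smul_sub_eq_of_disjoint_ball hd hρi hdisj hxy hi
    have hcy : c i - y = ρ i • e := smul_right_injective E hd.ne'
      (show d • (c i - y) = d • ρ i • e by rw [htan, hyx, smul_comm])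
    have hnorm := norm_add_smul_sq_of_inner_eq_zero hwe he (τ - ρ i)
    rw [show w + (τ - ρ i) • e = y + w + τ • e - c i by rw [sub_smul, ← hcy]; abel,
      ← dist_eq_norm] at hnorm
    refine hmem.2 (mem_iUnion.mpr ⟨i, mem_ball.mpr (lt_of_pow_lt_pow_left₀ 2 hρi.le ?_)⟩)
    nlinarith [hρ i]

theorem exists_add_smul_mem_frontier_swissCheese_inter_closedBall (hR : 0 < R)
    (hρ : ∀ i, 1 ≤ ρ i) (hball : ball x (2 / 3) ⊆ swissCheese x₀ R c ρ)
    (hy : y ∈ frontier (swissCheese x₀ R c ρ)) (he : ‖e‖ = 1) (hyx : y - x = (2 / 3 : ℝ) • e)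
    (hwe : ⟪w, e⟫ = 0) (hw : ‖w‖ ^ 2 ≤ 1 / 8) :
    ∃ t : ℝ, y + w + t • e ∈ frontier (swissCheese x₀ R c ρ) ∩ closedBall x 1 := by
  have hdist : ∀ t : ℝ, dist (y + w + t • e) x ^ 2 = ‖w‖ ^ 2 + (2 / 3 + t) ^ 2 := fun t => by
    rw [dist_eq_norm, show y + w + t • e - x = w + (2 / 3 + t) • e by rw [add_smul, ← hyx]; abel]
    exact norm_add_smul_sq_of_inner_eq_zero hwe he _
  have hin : y + w + (-1 / 4 : ℝ) • e ∈ swissCheese x₀ R c ρ :=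
    hball <| mem_ball.mpr <| lt_of_pow_lt_pow_left₀ 2 (by norm_num) (by rw [hdist]; linarith)
  have hout : y + w + (1 / 4 : ℝ) • e ∉ swissCheese x₀ R c ρ :=
    add_add_smul_notMem_swissCheese hR one_pos hρ (by norm_num) hball hy he hyx hwe
      (by norm_num) (by linarith)
  have hline : IsPreconnected ((fun t : ℝ => y + w + t • e) '' Icc (-1 / 4) (1 / 4)) :=
    isPreconnected_Icc.image _ (by fun_prop)
  obtain ⟨_, ⟨t, ht, rfl⟩, hfr⟩ := hline.inter_frontier_nonempty
    (mem_image_of_mem _ ⟨le_rfl, by norm_num⟩) hin (mem_image_of_mem _ ⟨by norm_num, le_rfl⟩) hout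
  refine ⟨t, hfr, mem_closedBall.mpr (le_of_pow_le_pow_left₀ two_ne_zero zero_le_one ?_)⟩
  rw [hdist]
  nlinarith [ht.1, ht.2]

end SwissCheese

theorem ofReal_le_hausdorffMeasure_frontier_swissCheese_inter_closedBall {E ι : Type*}
    [NormedAddCommGroup E] [InnerProductSpace ℝ E] [MeasurableSpace E] [BorelSpace E] [Finite ι]
    (hE : Module.finrank ℝ E = 3) {x₀ x : E} {R : ℝ} {c : ι → E} {ρ : ι → ℝ} (hR : 0 < R)
    (hρ : ∀ i, 1 ≤ ρ i) (hx : x ∈ swissCheese x₀ R c ρ)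
    (hdist : infDist x (frontier (swissCheese x₀ R c ρ)) = 2 / 3) :
    ENNReal.ofReal (1 / 4) ≤ μH[2] (frontier (swissCheese x₀ R c ρ) ∩ closedBall x 1) := by
  have : FiniteDimensional ℝ E := Module.finite_of_finrank_pos (by omega)
  have hne : (frontier (swissCheese x₀ R c ρ)).Nonempty :=
    (frontier _).eq_empty_or_nonempty.resolve_left fun h => by norm_num [h] at hdist
  obtain ⟨y, hyf, hxy⟩ := isClosed_frontier.exists_infDist_eq_dist hne x
  have hball : ball x (2 / 3) ⊆ swissCheese x₀ R c ρ := hdist ▸ ball_infDist_frontier_subset hx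
  set e := (3 / 2 : ℝ) • (y - x)
  have hyx : y - x = (2 / 3 : ℝ) • e := by rw [smul_smul]; norm_num
  have he : ‖e‖ = 1 := by rw [norm_smul, ← dist_eq_norm', ← hxy, hdist]; norm_num
  obtain ⟨u, hu, hue⟩ := exists_orthonormal_forall_inner_eq_zero (n := 2) hE
    (norm_ne_zero_iff.mp (he ▸ one_ne_zero))
  have hbox := pi_Icc_subset_image_inner hu hue (y := y) (b := 1 / 4) fun w hwe hw =>
    exists_add_smul_mem_frontier_swissCheese_inter_closedBall hR hρ hball hyf he hyx hwe
      (by norm_num at hw ⊢; linarith)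
  calc ENNReal.ofReal (1 / 4)
      = volume (univ.pi fun i : Fin 2 => Icc (⟪y, u i⟫ - 1 / 4) (⟪y, u i⟫ + 1 / 4)) := by
        rw [volume_pi_pi, Fin.prod_univ_two, Real.volume_Icc, Real.volume_Icc,
          ← ENNReal.ofReal_mul (by norm_num)]
        ring_nf
    _ ≤ μH[2] (frontier (swissCheese x₀ R c ρ) ∩ closedBall x 1) := by
        simpa using volume_le_hausdorffMeasure_of_subset_image
          (lipschitzWith_one_inner_pi fun i => (hu.1 i).le) hbox

/-- For `1 ≤ r ≤ R`, a closed ball `B` of radius `R`, finitely many open balls `bᵢ` of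
radius at least `r`, and `C = B \ ⋃ᵢ bᵢ`: every unit ball centered at a point of `C` at
distance exactly `2/3` from `∂C` contains at least `c` surface area of `C` (one may take
`c = 4π/27`). -/
theorem swiss_cheese_unit_ball_eats_area :
    ∃ c : ℝ, 0 < c ∧
      ∀ (r R : ℝ), 1 ≤ r → r ≤ R → ∀ (x₀ : E3) (k : ℕ) (ctr : Fin k → E3) (rad : Fin k → ℝ),
        (∀ i, r ≤ rad i) →
        ∀ x ∈ Metric.closedBall x₀ R \ ⋃ i, Metric.ball (ctr i) (rad i),
          Metric.infDist x
              (frontier (Metric.closedBall x₀ R \ ⋃ i, Metric.ball (ctr i) (rad i))) = 2 / 3 →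
          ENNReal.ofReal c ≤
            μH[2] (frontier (Metric.closedBall x₀ R \ ⋃ i, Metric.ball (ctr i) (rad i)) ∩
              Metric.closedBall x 1) :=
  ⟨1 / 4, by norm_num, fun _ _ hr hrR _ _ _ _ hrad _ hx hdist =>
    ofReal_le_hausdorffMeasure_frontier_swissCheese_inter_closedBall finrank_euclideanSpace_fin
      (one_pos.trans_le (hr.trans hrR)) (fun i => hr.trans (hrad i)) hx hdist⟩
end
end

section
/- There is an absolute constant c > 0 such that the following holds. Let S be a finite set of points in ℝ³ in which every two distinct points are at distance at least 2, let o ∈ S, and let r ≥ 1 be a real number. Then the number of points q ∈ S with dist(o,q) ≤ r that form a Delaunay edge of S with o is at most c·r². -/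
noncomputable section
open scoped Classical ENNReal Pointwise
open MeasureTheory Real

/-!
Invert at `o`. A Delaunay sphere through `o` and `q` becomes a plane through the image `q*` of
`q` with all other inverted points on one side, so each `q*` is a supported point of the inverted
set, with a unit normal `u`. Neighbours `q` with `2ᵏ ≤ |q - o| < 2ᵏ⁺¹` invert into a ball of
radius `2⁻ᵏ` with pairwise distances at least `(2 · 4ᵏ)⁻¹`. Two such supported points `p ≠ p'`
cannot have nearly equal normals and nearly equal coordinates transverse to a dominant coordinate
of the normal, since `0 ≤ ⟪u, p - p'⟫ ≤ ‖u - u'‖ ‖p - p'‖`. Pigeonholing over a grid of normals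
and a planar grid of transverse coordinates gives `O(4ᵏ)` neighbours in the `k`-th shell, and
summing over `2ᵏ ≤ r` gives `O(r²)`.
-/
open EuclideanGeometry Finset
open scoped RealInnerProductSpace

lemma abs_sub_lt_of_floor_div_eq {τ x y : ℝ} (hτ : 0 < τ) (h : ⌊x / τ⌋ = ⌊y / τ⌋) :
    |x - y| < τ := by
  have := Int.abs_sub_lt_one_of_floor_eq_floor h
  rwa [← sub_div, abs_div, abs_of_pos hτ, div_lt_one hτ] at this

lemma floor_div_mem_Icc {τ x : ℝ} {n : ℕ} (hτ : 0 < τ) (hx : |x| ≤ n * τ) :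
    ⌊x / τ⌋ ∈ Icc (-(n : ℤ)) n := by
  have hx' : |x / τ| ≤ n := by rwa [abs_div, abs_of_pos hτ, div_le_iff₀ hτ]
  obtain ⟨hlo, hhi⟩ := abs_le.mp hx'
  refine mem_Icc.mpr ⟨Int.le_floor.mpr (by push_cast; exact hlo), Int.floor_le_iff.mpr ?_⟩
  push_cast
  linarith

namespace EuclideanSpace

variable {n : ℕ}

lemma exists_sq_norm_le_mul_sq_apply [NeZero n] (x : EuclideanSpace ℝ (Fin n)) :
    ∃ i, ‖x‖ ^ 2 ≤ n * x i ^ 2 := by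
  obtain ⟨i, -, hi⟩ := exists_max_image univ (fun j => x j ^ 2) univ_nonempty
  refine ⟨i, ?_⟩
  rw [real_norm_sq_eq]
  simpa using sum_le_card_nsmul univ _ _ fun j _ => hi j (mem_univ j)

lemma sq_norm_le_of_abs_apply_le {t : ℝ} (x : EuclideanSpace ℝ (Fin n)) (h : ∀ j, |x j| ≤ t) :
    ‖x‖ ^ 2 ≤ n * t ^ 2 := by
  rw [real_norm_sq_eq]
  simpa using sum_le_card_nsmul univ _ _ fun j _ => sq_le_sq.mpr ((h j).trans (le_abs_self t))

end EuclideanSpace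

section InnerProductSpace

variable {E : Type*} [NormedAddCommGroup E] [InnerProductSpace ℝ E]

lemma inner_sub_sq_le_of_supporting {u u' p p' : E} (h : ⟪u, p'⟫ ≤ ⟪u, p⟫)
    (h' : ⟪u', p⟫ ≤ ⟪u', p'⟫) :
    ⟪u, p - p'⟫ ^ 2 ≤ ‖u - u'‖ ^ 2 * ‖p - p'‖ ^ 2 := by
  have hnonneg : 0 ≤ ⟪u, p - p'⟫ := by rw [inner_sub_right]; linarith
  have hle : ⟪u, p - p'⟫ ≤ ⟪u - u', p - p'⟫ := by
    rw [inner_sub_left, inner_sub_right u']; linarith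
  rw [← mul_pow]
  exact pow_le_pow_left₀ hnonneg (hle.trans (real_inner_le_norm _ _)) 2

lemma two_mul_inner_inversion_sub (c o s : E) (hs : s ≠ o) :
    2 * ⟪c - o, inversion o 1 s - o⟫ = 1 + (‖c - o‖ ^ 2 - ‖c - s‖ ^ 2) / ‖s - o‖ ^ 2 := by
  have hso : ‖s - o‖ ≠ 0 := norm_ne_zero_iff.mpr (sub_ne_zero.mpr hs)
  rw [show c - s = (c - o) - (s - o) by abel, norm_sub_sq_real (c - o) (s - o)]
  simp only [inversion, dist_eq_norm, vsub_eq_sub, vadd_eq_add, add_sub_cancel_right,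
    real_inner_smul_right]
  field_simp
  ring

end InnerProductSpace

lemma sq_inner_gt_of_abs_apply_succAbove_lt {u Δ : E3} {i : Fin 3} {τ : ℝ} (hu : ‖u‖ = 1)
    (hi : 1 ≤ 3 * u i ^ 2) (hΔ : 5 * τ ≤ ‖Δ‖) (ht : ∀ j : Fin 2, |Δ (i.succAbove j)| < τ) :
    3 / 64 * ‖Δ‖ ^ 2 < ⟪u, Δ⟫ ^ 2 := by
  set a := i.succAbove 0
  set b := i.succAbove 1
  have hu2 : u i ^ 2 + (u a ^ 2 + u b ^ 2) = 1 := by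
    rw [← one_pow 2, ← hu, EuclideanSpace.real_norm_sq_eq, Fin.sum_univ_succAbove _ i,
      Fin.sum_univ_two]
  have hΔ2 : ‖Δ‖ ^ 2 = Δ i ^ 2 + (Δ a ^ 2 + Δ b ^ 2) := by
    rw [EuclideanSpace.real_norm_sq_eq, Fin.sum_univ_succAbove _ i, Fin.sum_univ_two]
  have hinner : ⟪u, Δ⟫ = u i * Δ i + (u a * Δ a + u b * Δ b) := by
    simp only [PiLp.inner_apply, RCLike.inner_apply, conj_trivial, Fin.sum_univ_succAbove _ i,
      Fin.sum_univ_two, a, b]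
    ring
  have ha : Δ a ^ 2 < τ ^ 2 := sq_lt_sq' (abs_lt.mp (ht 0)).1 (abs_lt.mp (ht 0)).2
  have hb : Δ b ^ 2 < τ ^ 2 := sq_lt_sq' (abs_lt.mp (ht 1)).1 (abs_lt.mp (ht 1)).2
  have hτ : 0 < τ := (abs_nonneg _).trans_lt (ht 0)
  have h25 : 25 * τ ^ 2 ≤ ‖Δ‖ ^ 2 := by nlinarith
  have htrans : (u a * Δ a + u b * Δ b) ^ 2 ≤ 2 * τ ^ 2 := by
    have hcs : (u a * Δ a + u b * Δ b) ^ 2 ≤ (u a ^ 2 + u b ^ 2) * (Δ a ^ 2 + Δ b ^ 2) := by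
      nlinarith [sq_nonneg (u a * Δ b - u b * Δ a)]
    have hu1 : u a ^ 2 + u b ^ 2 ≤ 1 := by nlinarith [sq_nonneg (u i)]
    nlinarith [mul_le_mul_of_nonneg_right hu1 (by positivity : 0 ≤ Δ a ^ 2 + Δ b ^ 2)]
  have hlong : ‖Δ‖ ^ 2 - 2 * τ ^ 2 ≤ 3 * (u i * Δ i) ^ 2 := by nlinarith [sq_nonneg (Δ i)]
  have hsplit : (u i * Δ i) ^ 2 ≤ 2 * ⟪u, Δ⟫ ^ 2 + 2 * (u a * Δ a + u b * Δ b) ^ 2 := by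
    rw [hinner]; nlinarith [sq_nonneg (u i * Δ i + 2 * (u a * Δ a + u b * Δ b))]
  by_contra! hle
  nlinarith

theorem card_le_of_supported_of_separated (P : Finset E3) (c : E3) {τ : ℝ} (n : ℕ) (hτ : 0 < τ)
    (hball : ∀ p ∈ P, dist p c ≤ n * τ)
    (hsep : ∀ p ∈ P, ∀ p' ∈ P, p ≠ p' → 5 * τ ≤ dist p p')
    (hsupp : ∀ p ∈ P, ∃ u : E3, ‖u‖ = 1 ∧ ∀ p' ∈ P, ⟪u, p'⟫ ≤ ⟪u, p⟫) :
    #P ≤ 17 ^ 3 * 3 * (2 * n + 1) ^ 2 := by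
  choose! u hu hsupp using hsupp
  choose i hi using fun p => EuclideanSpace.exists_sq_norm_le_mul_sq_apply (u p)
  have h8 : (0 : ℝ) < 8⁻¹ := by norm_num
  let label : E3 → (Fin 3 → ℤ) × Fin 3 × (Fin 2 → ℤ) := fun p =>
    (fun j => ⌊u p j / 8⁻¹⌋, i p, fun j => ⌊(p - c) ((i p).succAbove j) / τ⌋)
  let cells := Fintype.piFinset (fun _ : Fin 3 => Icc (-8 : ℤ) 8) ×ˢ (univ : Finset (Fin 3)) ×ˢ
    Fintype.piFinset (fun _ : Fin 2 => Icc (-(n : ℤ)) n)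
  have hcells : #cells = 17 ^ 3 * 3 * (2 * n + 1) ^ 2 := by
    simp only [cells, card_product, Fintype.card_piFinset, Int.card_Icc, prod_const, card_univ,
      Fintype.card_fin]
    rw [show ((n : ℤ) + 1 - -n).toNat = 2 * n + 1 by omega, show (8 + 1 - -8 : ℤ).toNat = 17 by rfl]
    ring
  rw [← hcells]
  refine card_le_card_of_injOn label (fun p hp => ?_) (fun p hp p' hp' hpp' => ?_)
  · simp only [cells, label, coe_product, Set.mem_prod, coe_univ, Set.mem_univ, true_and,
      Fintype.coe_piFinset, Set.mem_pi, mem_coe]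
    refine ⟨fun j _ => floor_div_mem_Icc h8 ?_, fun j _ => floor_div_mem_Icc hτ ?_⟩
    · have := PiLp.norm_apply_le (u p) j
      rw [hu p hp, Real.norm_eq_abs] at this
      norm_num [this]
    · have := PiLp.norm_apply_le (p - c) ((i p).succAbove j)
      rw [Real.norm_eq_abs, ← dist_eq_norm] at this
      exact this.trans (hball p hp)
  · by_contra hne
    simp only [label, Prod.mk.injEq, funext_iff] at hpp'
    obtain ⟨hcellu, hip, hcellp⟩ := hpp'
    have hclose : ‖u p - u p'‖ ^ 2 ≤ 3 * (8⁻¹) ^ 2 := by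
      simpa using EuclideanSpace.sq_norm_le_of_abs_apply_le (u p - u p')
        fun j => (abs_sub_lt_of_floor_div_eq h8 (hcellu j)).le
    have htrans : ∀ j : Fin 2, |(p - p') ((i p).succAbove j)| < τ := fun j => by
      have := hcellp j
      rw [← hip] at this
      simpa using abs_sub_lt_of_floor_div_eq hτ this
    have hfar : 5 * τ ≤ ‖p - p'‖ := dist_eq_norm p p' ▸ hsep p hp p' hp' hne
    have hle := inner_sub_sq_le_of_supporting (hsupp p hp p' hp') (hsupp p' hp' p hp)
    have hgt := sq_inner_gt_of_abs_apply_succAbove_lt (hu p hp) (by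
      have := hi p; rw [hu p hp] at this; exact_mod_cast this)
      hfar htrans
    have hclose' : ‖u p - u p'‖ ^ 2 * ‖p - p'‖ ^ 2 ≤ 3 / 64 * ‖p - p'‖ ^ 2 :=
      mul_le_mul_of_nonneg_right (by norm_num at hclose ⊢; linarith) (sq_nonneg _)
    linarith

lemma IsDelaunayEdge.exists_supporting_inversion {S : Finset E3} {o q : E3}
    (h : IsDelaunayEdge S o q) :
    ∃ u : E3, ‖u‖ = 1 ∧ ∀ s ∈ S, s ≠ o → ⟪u, inversion o 1 s⟫ ≤ ⟪u, inversion o 1 q⟫ := by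
  obtain ⟨-, -, hoq, c, ρ, hρ, hco, hcq, hempty⟩ := h
  have hco' : ‖c - o‖ = ρ := by rwa [← dist_eq_norm]
  refine ⟨ρ⁻¹ • (c - o), by rw [norm_smul, hco', Real.norm_of_nonneg (inv_nonneg.2 hρ.le),
    inv_mul_cancel₀ hρ.ne'], fun s hs hso => ?_⟩
  have hs' := two_mul_inner_inversion_sub c o s hso
  have hq' := two_mul_inner_inversion_sub c o q hoq.symm
  rw [← dist_eq_norm c q, hcq, hco', sub_self, zero_div, add_zero] at hq'
  rw [← dist_eq_norm c s, hco'] at hs'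
  have hle : (ρ ^ 2 - dist c s ^ 2) / ‖s - o‖ ^ 2 ≤ 0 :=
    div_nonpos_of_nonpos_of_nonneg (by nlinarith [hempty s hs]) (sq_nonneg _)
  rw [real_inner_smul_left, real_inner_smul_left]
  refine mul_le_mul_of_nonneg_left ?_ (inv_nonneg.2 hρ.le)
  rw [inner_sub_right] at hs' hq'
  linarith

def delaunayShell (S : Finset E3) (o : E3) (k : ℕ) : Finset E3 :=
  S.filter fun q => IsDelaunayEdge S o q ∧ 2 ^ k ≤ dist q o ∧ dist q o < 2 ^ (k + 1)

lemma card_delaunayShell_le (S : Finset E3) (hS : ∀ p ∈ S, ∀ q ∈ S, p ≠ q → 2 ≤ dist p q)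
    (o : E3) (k : ℕ) :
    #(delaunayShell S o k) ≤ 17 ^ 3 * 3 * (2 * (10 * 2 ^ k) + 1) ^ 2 := by
  set T := delaunayShell S o k
  have hmem : ∀ q ∈ T, q ∈ S ∧ IsDelaunayEdge S o q ∧ q ≠ o ∧ 2 ^ k ≤ dist q o ∧
      dist q o < 2 ^ (k + 1) := fun q hq => by
    obtain ⟨hqS, hq, hlo, hhi⟩ := mem_filter.mp hq
    exact ⟨hqS, hq, hq.2.2.1.symm, hlo, hhi⟩
  have hx : (0 : ℝ) < 2 ^ k := by positivity
  rw [← card_image_of_injective T (inversion_injective o one_ne_zero)]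
  refine card_le_of_supported_of_separated _ o (10 * 2 ^ k) (τ := (10 * 2 ^ k * 2 ^ k)⁻¹)
    (by positivity) ?_ ?_ ?_ <;> simp only [forall_mem_image]
  · intro q hq
    obtain ⟨-, -, hqo, hlo, -⟩ := hmem q hq
    rw [dist_inversion_center]
    push_cast
    field_simp
    exact div_le_one_of_le₀ hlo dist_nonneg
  · intro q hq q' hq' hne
    obtain ⟨hqS, -, hqo, hlo, hhi⟩ := hmem q hq
    obtain ⟨hq'S, -, hq'o, hlo', hhi'⟩ := hmem q' hq'
    rw [dist_inversion_inversion hqo hq'o]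
    have hqq' := hS q hqS q' hq'S (fun h => hne (h ▸ rfl))
    have hprod : dist q o * dist q' o ≤ 2 ^ (k + 1) * 2 ^ (k + 1) :=
      mul_le_mul hhi.le hhi'.le dist_nonneg (by positivity)
    calc 5 * (10 * 2 ^ k * 2 ^ k)⁻¹ = (2 : ℝ) / (2 ^ (k + 1) * 2 ^ (k + 1)) := by
          field_simp; ring
      _ ≤ 1 ^ 2 / (dist q o * dist q' o) * dist q q' := by
          rw [one_pow, one_div_mul_eq_div]
          exact div_le_div₀ (by linarith) hqq' (mul_pos (hx.trans_le hlo) (hx.trans_le hlo'))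
            hprod
  · intro q hq
    obtain ⟨hqS, hq, -⟩ := hmem q hq
    obtain ⟨u, hu, hsupp⟩ := hq.exists_supporting_inversion
    exact ⟨u, hu, fun q' hq' => hsupp q' (hmem q' hq').1 (hmem q' hq').2.2.1⟩

lemma two_pow_log_floor_le {x : ℝ} (hx : 1 ≤ x) : (2 : ℝ) ^ Nat.log 2 ⌊x⌋₊ ≤ x := by
  have := Int.zpow_log_le_self (b := 2) one_lt_two (zero_lt_one.trans_le hx)
  rwa [Int.log_of_one_le_right 2 hx, zpow_natCast, Nat.cast_ofNat] at this

lemma lt_two_pow_log_floor_succ {x : ℝ} (hx : 1 ≤ x) : x < 2 ^ (Nat.log 2 ⌊x⌋₊ + 1) := by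
  have := Int.lt_zpow_succ_log_self (b := 2) one_lt_two x
  rwa [Int.log_of_one_le_right 2 hx, ← Nat.cast_succ, zpow_natCast, Nat.cast_ofNat] at this

lemma setOf_delaunayEdge_subset_biUnion_shell {S : Finset E3}
    (hS : ∀ p ∈ S, ∀ q ∈ S, p ≠ q → 2 ≤ dist p q) (o : E3) (r : ℝ) :
    {q : E3 | q ∈ S ∧ dist o q ≤ r ∧ IsDelaunayEdge S o q} ⊆
      ↑((range (Nat.log 2 ⌊r⌋₊ + 1)).biUnion (delaunayShell S o)) := by
  rintro q ⟨hqS, hqr, hq⟩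
  have hqo : 1 ≤ dist q o := by linarith [hS q hqS o hq.1 hq.2.2.1.symm]
  rw [dist_comm] at hqr
  simp only [coe_biUnion, coe_range, Set.mem_iUnion, Set.mem_Iio, mem_coe, delaunayShell,
    mem_filter]
  exact ⟨_, Nat.lt_succ_of_le (Nat.log_mono_right (Nat.floor_mono hqr)), hqS, hq,
    two_pow_log_floor_le hqo, lt_two_pow_log_floor_succ hqo⟩

lemma three_mul_sum_sq_le (K : ℕ) :
    3 * ∑ k ∈ range (K + 1), (2 * (10 * 2 ^ k) + 1) ^ 2 ≤ 4 * 21 ^ 2 * 4 ^ K := by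
  induction K with
  | zero => norm_num
  | succ K ih =>
    have h4 : 4 ^ K * 4 = 2 ^ (K + 1) * 2 ^ (K + 1) := by
      rw [← mul_pow, ← pow_succ]; norm_num
    have hlast : (2 * (10 * 2 ^ (K + 1)) + 1) ^ 2 ≤ (21 * 2 ^ (K + 1)) ^ 2 :=
      Nat.pow_le_pow_left (by linarith [Nat.one_le_two_pow (n := K + 1)]) 2
    rw [sum_range_succ, mul_add, pow_succ 4 K]
    nlinarith

/-- If every two distinct points of a finite set `S ⊆ ℝ³` are at distance at least `2`, then
any point `o ∈ S` has at most `c·r²` Delaunay neighbors at distance at most `r`. -/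
theorem delaunay_nearby_degree_bound :
    ∃ c : ℝ, 0 < c ∧
      ∀ S : Finset E3, (∀ p ∈ S, ∀ q ∈ S, p ≠ q → 2 ≤ dist p q) →
        ∀ o ∈ S, ∀ r : ℝ, 1 ≤ r →
          (Set.ncard {q : E3 | q ∈ S ∧ dist o q ≤ r ∧ IsDelaunayEdge S o q} : ℝ) ≤
            c * r ^ 2 := by
  refine ⟨4 * 17 ^ 3 * 21 ^ 2, by norm_num, fun S hS o _ r hr => ?_⟩
  set K := Nat.log 2 ⌊r⌋₊
  have hcard : Set.ncard {q : E3 | q ∈ S ∧ dist o q ≤ r ∧ IsDelaunayEdge S o q} ≤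
      4 * 17 ^ 3 * 21 ^ 2 * 4 ^ K := calc
    _ ≤ #((range (K + 1)).biUnion (delaunayShell S o)) :=
      (Set.ncard_le_ncard (setOf_delaunayEdge_subset_biUnion_shell hS o r)
        (finite_toSet _)).trans_eq (Set.ncard_coe_finset _)
    _ ≤ ∑ k ∈ range (K + 1), #(delaunayShell S o k) := card_biUnion_le
    _ ≤ ∑ k ∈ range (K + 1), 17 ^ 3 * 3 * (2 * (10 * 2 ^ k) + 1) ^ 2 :=
      sum_le_sum fun k _ => card_delaunayShell_le S hS o k
    _ ≤ 4 * 17 ^ 3 * 21 ^ 2 * 4 ^ K := by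
      rw [← mul_sum, mul_assoc]
      nlinarith [three_mul_sum_sq_le K]
  calc _ ≤ ((4 * 17 ^ 3 * 21 ^ 2 * 4 ^ K : ℕ) : ℝ) := by exact_mod_cast hcard
    _ = 4 * 17 ^ 3 * 21 ^ 2 * ((2 : ℝ) ^ K) ^ 2 := by
      push_cast; rw [← pow_mul, mul_comm K, pow_mul]; norm_num
    _ ≤ 4 * 17 ^ 3 * 21 ^ 2 * r ^ 2 := by gcongr; exact two_pow_log_floor_le hr
end
end

section
/- There is an absolute constant c > 0 such that the following holds. Let S be a finite set of points in ℝ³ in which every two distinct points are at distance at least 2 and whose diameter is at most 2Δ, and let r ≥ 1 be a real number. Then the number of points p ∈ S that form a Delaunay edge of S with some point q ∈ S at distance dist(p,q) ≥ r is at most c·Δ³/r. -/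
noncomputable section
open scoped Classical ENNReal Pointwise
open MeasureTheory Real

/-! If `p` has a Delaunay neighbour at distance `≥ r`, the empty ball through both has radius
`≥ r / 2`, so an empty ball of radius `R = r / 4` touches `S` at `p`, from some unit direction
`u p`. From each such `p` take the `⌊R / 4⌋ + 1` points `p + i • u p`. The empty ball at `p`
forces `⟪p - q, u p⟫ ≥ -‖p - q‖² / 2R` for every other `q`, so neither of two such short walks
heads towards the other's start, and walks from different points stay `√2` apart. All the points
are therefore `1`-separated and lie in a ball of radius `4Δ`; comparing volumes gives
`#P · (r / 16) · (1/2)³ ≤ (4Δ)³`. -/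

open Metric Module
open scoped InnerProductSpace

theorem card_mul_pow_le_of_pairwise_le_dist {E ι : Type*} [NormedAddCommGroup E]
    [NormedSpace ℝ E] [FiniteDimensional ℝ E] (s : Finset ι) (f : ι → E) (x : E) {ε R : ℝ}
    (hε : 0 < ε) (hR : 0 ≤ R) (hsep : (s : Set ι).Pairwise fun i j => ε ≤ dist (f i) (f j))
    (hdist : ∀ i ∈ s, dist (f i) x ≤ R) :
    (s.card : ℝ) * (ε / 2) ^ finrank ℝ E ≤ (R + ε / 2) ^ finrank ℝ E := by
  borelize E
  let μ : Measure E := Measure.addHaar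
  have hdisj : (s : Set ι).PairwiseDisjoint fun i => ball (f i) (ε / 2) := fun i hi j hj hij =>
    ball_disjoint_ball (by linarith [hsep hi hj hij])
  have hsub : ⋃ i ∈ s, ball (f i) (ε / 2) ⊆ ball x (R + ε / 2) := Set.iUnion₂_subset fun i hi =>
    ball_subset_ball' (by linarith [hdist i hi])
  have hvol : (s.card : ℝ≥0∞) * ENNReal.ofReal ((ε / 2) ^ finrank ℝ E) * μ (ball 0 1) ≤
      ENNReal.ofReal ((R + ε / 2) ^ finrank ℝ E) * μ (ball 0 1) :=
    calc (s.card : ℝ≥0∞) * ENNReal.ofReal ((ε / 2) ^ finrank ℝ E) * μ (ball 0 1)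
        = μ (⋃ i ∈ s, ball (f i) (ε / 2)) := by
          rw [measure_biUnion_finset hdisj fun _ _ => measurableSet_ball]
          simp only [μ.addHaar_ball_of_pos _ (half_pos hε), Finset.sum_const, nsmul_eq_mul,
            mul_assoc]
      _ ≤ μ (ball x (R + ε / 2)) := measure_mono hsub
      _ = ENNReal.ofReal ((R + ε / 2) ^ finrank ℝ E) * μ (ball 0 1) :=
          μ.addHaar_ball_of_pos _ (by linarith)
  have hcancel := (ENNReal.mul_le_mul_iff_left (measure_ball_pos μ (0 : E) one_pos).ne'
    measure_ball_lt_top.ne).1 hvol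
  rw [← ENNReal.ofReal_natCast, ← ENNReal.ofReal_mul (Nat.cast_nonneg _)] at hcancel
  exact (ENNReal.ofReal_le_ofReal_iff (by positivity)).1 hcancel

theorem exists_norm_eq_one_forall_le_dist_add_smul {V : Type*} [NormedAddCommGroup V]
    [NormedSpace ℝ V] {S : Set V} {c p q : V} {ρ R : ℝ} (hp : dist c p = ρ) (hq : dist c q = ρ)
    (hS : ∀ s ∈ S, ρ ≤ dist c s) (hR : 0 < R) (hRpq : 2 * R ≤ dist p q) :
    ∃ u : V, ‖u‖ = 1 ∧ ∀ s ∈ S, R ≤ dist (p + R • u) s := by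
  have hRρ : R ≤ ρ := by linarith [dist_triangle_left p q c]
  have hρ : 0 < ρ := hR.trans_le hRρ
  refine ⟨ρ⁻¹ • (c - p), ?_, fun s hs => ?_⟩
  · rw [norm_smul, ← dist_eq_norm, hp, norm_inv, norm_of_nonneg hρ.le, inv_mul_cancel₀ hρ.ne']
  have hm : p + R • ρ⁻¹ • (c - p) = AffineMap.lineMap p c (R / ρ) := by
    rw [AffineMap.lineMap_apply, smul_smul, vsub_eq_sub, vadd_eq_add, add_comm, div_eq_mul_inv]
  have hmc : dist (p + R • ρ⁻¹ • (c - p)) c = ρ - R := by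
    rw [hm, dist_lineMap_right, dist_comm, hp, norm_of_nonneg (by
      rw [sub_nonneg, div_le_one hρ]; exact hRρ)]
    field_simp
  linarith [dist_triangle_left c s (p + R • ρ⁻¹ • (c - p)), hS s hs]

theorem dist_sq_le_two_mul_dist_add_smul_sq {V : Type*} [NormedAddCommGroup V]
    [InnerProductSpace ℝ V] {p q u u' : V} {R t t' : ℝ} (hu : ‖u‖ = 1) (hu' : ‖u'‖ = 1)
    (hR : 0 < R) (hp : R ≤ dist (p + R • u) q) (hq : R ≤ dist (q + R • u') p)
    (ht : 0 ≤ t) (ht' : 0 ≤ t') (htt' : t + t' ≤ R / 2) :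
    dist p q ^ 2 ≤ 2 * dist (p + t • u) (q + t' • u') ^ 2 := by
  have tangent : ∀ x y v : V, ‖v‖ = 1 → R ≤ dist (x + R • v) y →
      0 ≤ ‖x - y‖ ^ 2 + 2 * R * ⟪x - y, v⟫_ℝ := by
    intro x y v hv h
    rw [dist_eq_norm, show x + R • v - y = (x - y) + R • v by abel, ← sq_le_sq₀ hR.le
      (norm_nonneg _), norm_add_sq_real, norm_smul, hv, real_inner_smul_right,
      Real.norm_of_nonneg hR.le] at h
    nlinarith
  have hpu := tangent p q u hu hp
  have hqu' := tangent q p u' hu' hq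
  rw [norm_sub_rev, ← neg_sub p q, inner_neg_left] at hqu'
  have huu' : ⟪u, u'⟫_ℝ ≤ 1 := (real_inner_le_norm u u').trans (by rw [hu, hu', one_mul])
  have expand : dist (p + t • u) (q + t' • u') ^ 2 = ‖p - q‖ ^ 2 + t ^ 2 + t' ^ 2
      + 2 * t * ⟪p - q, u⟫_ℝ - 2 * t' * ⟪p - q, u'⟫_ℝ - 2 * t * t' * ⟪u, u'⟫_ℝ := by
    rw [dist_eq_norm, show p + t • u - (q + t' • u') = (p - q) + t • u - t' • u' by abel,
      norm_sub_sq_real, norm_add_sq_real, inner_add_left, norm_smul, norm_smul, hu, hu']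
    simp only [real_inner_smul_left, real_inner_smul_right, Real.norm_eq_abs, mul_pow, sq_abs]
    ring
  rw [expand, dist_eq_norm]
  -- `hpu` and `hqu'` bound `⟪p - q, u⟫` below and `⟪p - q, u'⟫` above by `∓ ‖p - q‖² / 2R`,
  -- and `t + t' ≤ R / 2` then keeps half of `‖p - q‖²`
  nlinarith [mul_nonneg ht hpu, mul_nonneg ht' hqu', mul_nonneg (mul_nonneg ht ht')
    (sub_nonneg.2 huu'), sq_nonneg (t - t'), mul_le_mul_of_nonneg_right htt' (sq_nonneg ‖p - q‖)]

section EmptyBalls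

variable {V : Type*} [NormedAddCommGroup V] [InnerProductSpace ℝ V] {u : V → V} {R : ℝ}

theorem pairwise_one_le_dist_add_smul_of_empty_balls {P : Set V} (hR : 0 < R)
    (hsep : P.Pairwise fun p q => 2 ≤ dist p q) (hu : ∀ p ∈ P, ‖u p‖ = 1)
    (hball : ∀ p ∈ P, ∀ q ∈ P, R ≤ dist (p + R • u p) q) :
    (P ×ˢ {i : ℕ | (i : ℝ) ≤ R / 4}).Pairwise fun x y =>
      1 ≤ dist (x.1 + (x.2 : ℝ) • u x.1) (y.1 + (y.2 : ℝ) • u y.1) := by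
  rintro ⟨p, i⟩ ⟨hp, hi : (i : ℝ) ≤ R / 4⟩ ⟨q, j⟩ ⟨hq, hj : (j : ℝ) ≤ R / 4⟩ hne
  dsimp only
  obtain rfl | hpq := eq_or_ne p q
  · have hij : (i : ℤ) ≠ j := Nat.cast_injective.ne fun h => hne (by rw [h])
    rw [dist_add_left, dist_eq_norm, ← sub_smul, norm_smul, hu p hp, mul_one, Real.norm_eq_abs]
    exact_mod_cast Int.one_le_abs (sub_ne_zero.2 hij)
  · have hdist := dist_sq_le_two_mul_dist_add_smul_sq (hu p hp) (hu q hq) hR (hball p hp q hq)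
      (hball q hq p hp) (Nat.cast_nonneg i) (Nat.cast_nonneg j) (by linarith)
    nlinarith [hsep hp hq hpq, dist_nonneg (x := p + (i : ℝ) • u p) (y := q + (j : ℝ) • u q)]

theorem card_mul_le_of_empty_balls [FiniteDimensional ℝ V] (P : Finset V) {D : ℝ} {p₀ : V}
    (hR : 0 < R) (hD : 0 ≤ D) (hsep : (P : Set V).Pairwise fun p q => 2 ≤ dist p q)
    (hu : ∀ p ∈ P, ‖u p‖ = 1) (hball : ∀ p ∈ P, ∀ q ∈ P, R ≤ dist (p + R • u p) q)
    (hdist : ∀ p ∈ P, dist p p₀ ≤ D) :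
    (P.card : ℝ) * (⌊R / 4⌋₊ + 1) * (1 / 2) ^ finrank ℝ V ≤
      (D + R / 4 + 1 / 2) ^ finrank ℝ V := by
  have hrange : ∀ i ∈ Finset.range (⌊R / 4⌋₊ + 1), (i : ℝ) ≤ R / 4 := fun i hi =>
    (Nat.cast_le.2 (Nat.lt_succ_iff.1 (Finset.mem_range.1 hi))).trans (Nat.floor_le (by positivity))
  have hsub : ((P ×ˢ Finset.range (⌊R / 4⌋₊ + 1) : Finset (V × ℕ)) : Set (V × ℕ)) ⊆
      (P : Set V) ×ˢ {i : ℕ | (i : ℝ) ≤ R / 4} := fun x hx =>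
    ⟨(Finset.mem_product.1 hx).1, hrange _ (Finset.mem_product.1 hx).2⟩
  have hpack := card_mul_pow_le_of_pairwise_le_dist (P ×ˢ Finset.range (⌊R / 4⌋₊ + 1))
    (fun x => x.1 + (x.2 : ℝ) • u x.1) p₀ one_pos (by positivity : 0 ≤ D + R / 4)
    ((pairwise_one_le_dist_add_smul_of_empty_balls hR hsep hu hball).mono hsub)
    (fun x hx => by
      obtain ⟨hp, hi⟩ := Finset.mem_product.1 hx
      calc dist (x.1 + (x.2 : ℝ) • u x.1) p₀ ≤ dist (x.1 + (x.2 : ℝ) • u x.1) x.1 + dist x.1 p₀ :=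
            dist_triangle _ _ _
        _ ≤ D + R / 4 := by
          rw [dist_self_add_left, norm_smul, hu _ hp, mul_one, Real.norm_natCast]
          linarith [hrange _ hi, hdist _ hp])
  rw [Finset.card_product, Finset.card_range] at hpack
  push_cast at hpack
  linarith

end EmptyBalls

theorem IsDelaunayEdge.exists_empty_ball {S : Finset E3} {p q : E3} (h : IsDelaunayEdge S p q)
    {R : ℝ} (hR : 0 < R) (hRpq : 2 * R ≤ dist p q) :
    ∃ u : E3, ‖u‖ = 1 ∧ ∀ s ∈ S, R ≤ dist (p + R • u) s :=
  let ⟨_, _, _, _, _, _, hcp, hcq, hS⟩ := h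
  exists_norm_eq_one_forall_le_dist_add_smul (S := (S : Set E3)) hcp hcq hS hR hRpq

/-- If every two distinct points of a finite set `S ⊆ ℝ³` are at distance at least `2` and
the diameter of `S` is at most `2Δ`, then for any `r ≥ 1` at most `c·Δ³/r` points of `S`
have a Delaunay neighbor at distance at least `r`. -/
theorem delaunay_far_reaching_bound :
    ∃ c : ℝ, 0 < c ∧
      ∀ (S : Finset E3) (Δ : ℝ), (∀ p ∈ S, ∀ q ∈ S, p ≠ q → 2 ≤ dist p q) →
        Metric.diam (S : Set E3) ≤ 2 * Δ →
        ∀ r : ℝ, 1 ≤ r →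
          (Set.ncard {p : E3 | p ∈ S ∧ ∃ q ∈ S, r ≤ dist p q ∧ IsDelaunayEdge S p q} : ℝ) ≤
            c * Δ ^ 3 / r := by
  refine ⟨8192, by norm_num, fun S Δ hsep hdiam r hr => ?_⟩
  set P := S.filter fun p => ∃ q ∈ S, r ≤ dist p q ∧ IsDelaunayEdge S p q
  have hPS : P ⊆ S := Finset.filter_subset _ _
  have hS : ∀ p ∈ S, ∀ q ∈ S, dist p q ≤ 2 * Δ := fun p hp q hq =>
    (dist_le_diam_of_mem S.finite_toSet.isBounded hp hq).trans hdiam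
  rw [show {p | p ∈ S ∧ ∃ q ∈ S, r ≤ dist p q ∧ IsDelaunayEdge S p q} = (P : Set E3) by
    ext; simp [P], Set.ncard_coe_finset]
  obtain hP | ⟨p₀, hp₀⟩ := P.eq_empty_or_nonempty
  · rw [hP, Finset.card_empty, Nat.cast_zero]
    have hΔ : 0 ≤ Δ := by linarith [(diam_nonneg (s := (S : Set E3))).trans hdiam]
    exact div_nonneg (by positivity) (by linarith)
  have hr₂ : r ≤ 2 * Δ := by
    obtain ⟨q, hq, hpq, -⟩ := (Finset.mem_filter.1 hp₀).2
    linarith [hS p₀ (hPS hp₀) q hq]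
  have hball : ∀ p ∈ P, ∃ u : E3, ‖u‖ = 1 ∧ ∀ s ∈ S, r / 4 ≤ dist (p + (r / 4) • u) s :=
    fun p hp =>
      let ⟨_, _, hpq, hpq_edge⟩ := (Finset.mem_filter.1 hp).2
      hpq_edge.exists_empty_ball (by positivity) (by linarith)
  choose! u hu hball using hball
  have hpack := card_mul_le_of_empty_balls P (p₀ := p₀) (by positivity : 0 < r / 4)
    (by linarith : 0 ≤ 2 * Δ) (fun p hp q hq => hsep p (hPS hp) q (hPS hq))
    hu (fun p hp q hq => hball p hp q (hPS hq)) (fun p hp => hS p (hPS hp) p₀ (hPS hp₀))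
  rw [finrank_euclideanSpace_fin] at hpack
  have hN : r / 16 ≤ ⌊r / 4 / 4⌋₊ + 1 := by linarith [Nat.lt_floor_add_one (r / 4 / 4)]
  have hrad : 2 * Δ + r / 4 / 4 + 1 / 2 ≤ 4 * Δ := by linarith
  -- `8192 = 16 · 2³ · 4³`
  rw [le_div_iff₀ (by linarith)]
  nlinarith [pow_le_pow_left₀ (by linarith) hrad 3,
    mul_le_mul_of_nonneg_left hN (Nat.cast_nonneg P.card)]
end
end
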